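/- Let v and w be independent, integrable, real-valued random variables on a probability space, and let p be a real number with P[v ≥ p] ≥ 1/2 and P[w ≤ p] ≥ 1/2 (i.e., p lies between the seller's median and the buyer's median). Then E[(v − w)·1(w ≤ v)] ≤ 2 · E[(v − w)·1(w ≤ p ∧ p ≤ v)], i.e., the fixed price p achieves a 2-approximation to the optimal gain from trade. -/

import Mathlib

open MeasureTheory ProbabilityTheory

/-!
Write `(x)⁺ = max x 0`. Splitting `v - w = (v - p) + (p - w)` bounds the optimal gain by
`E[(v - p)⁺] + E[(p - w)⁺]`. On the other hand, the gain at price `p` is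
`(v - p)⁺ · 1(w ≤ p) + 1(p ≤ v) · (p - w)⁺`, so by independence it equals
`E[(v - p)⁺] P[w ≤ p] + P[p ≤ v] E[(p - w)⁺]`, and both probabilities are at least `1/2`.
-/

lemma max_sub_le_max_sub_add_max_sub (a b p : ℝ) :
    max (a - b) 0 ≤ max (a - p) 0 + max (p - b) 0 := by
  simpa using max_add_add_le_max_add_max (a := a - p) (b := p - b) (c := (0 : ℝ)) (d := 0)

lemma ite_and_sub_eq_max_mul_indicator_add (a b p : ℝ) :
    (if b ≤ p ∧ p ≤ a then a - b else 0) =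
      max (a - p) 0 * (Set.Iic p).indicator 1 b + (Set.Ici p).indicator 1 a * max (p - b) 0 := by
  by_cases hb : b ≤ p <;> by_cases ha : p ≤ a <;>
    simp [hb, ha, sub_nonneg.2, le_of_not_ge]

section

variable {Ω : Type*} [MeasurableSpace Ω] {μ : Measure Ω}

lemma integral_indicator_one_comp {α : Type*} [MeasurableSpace α] {X : Ω → α}
    (hX : AEMeasurable X μ) {s : Set α} (hs : MeasurableSet s) :
    ∫ ω, s.indicator 1 (X ω) ∂μ = μ.real (X ⁻¹' s) := by
  rw [← integral_map hX (by fun_prop), integral_indicator_one hs,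
    map_measureReal_apply_of_aemeasurable hX hs]

lemma integrable_indicator_one_comp [IsFiniteMeasure μ] {α : Type*} [MeasurableSpace α]
    {X : Ω → α} (hX : AEMeasurable X μ) {s : Set α} (hs : MeasurableSet s) :
    Integrable (fun ω ↦ s.indicator (1 : α → ℝ) (X ω)) μ :=
  ((integrable_const (1 : ℝ)).indicator hs).comp_aemeasurable hX

variable [IsFiniteMeasure μ] {v w : Ω → ℝ}

lemma integral_ite_sub_le_integral_max_add (hvi : Integrable v μ) (hwi : Integrable w μ) (p : ℝ) :
    ∫ ω, (if w ω ≤ v ω then v ω - w ω else 0) ∂μ ≤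
      ∫ ω, max (v ω - p) 0 ∂μ + ∫ ω, max (p - w ω) 0 ∂μ := by
  have hvp : Integrable (fun ω ↦ max (v ω - p) 0) μ := (hvi.sub (integrable_const p)).pos_part
  have hpw : Integrable (fun ω ↦ max (p - w ω) 0) μ := ((integrable_const p).sub hwi).pos_part
  have h_eq : (fun ω ↦ if w ω ≤ v ω then v ω - w ω else 0) = fun ω ↦ max (v ω - w ω) 0 := by
    funext ω
    split_ifs with h <;> simp [h, le_of_not_ge]
  rw [h_eq, ← integral_add hvp hpw]
  exact integral_mono (hvi.sub hwi).pos_part (hvp.add hpw)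
    fun ω ↦ max_sub_le_max_sub_add_max_sub (v ω) (w ω) p

lemma ProbabilityTheory.IndepFun.integral_ite_and_sub_eq (hindep : IndepFun v w μ)
    (hvi : Integrable v μ) (hwi : Integrable w μ) (p : ℝ) :
    ∫ ω, (if w ω ≤ p ∧ p ≤ v ω then v ω - w ω else 0) ∂μ =
      (∫ ω, max (v ω - p) 0 ∂μ) * μ.real {ω | w ω ≤ p} +
        μ.real {ω | p ≤ v ω} * ∫ ω, max (p - w ω) 0 ∂μ := by
  have hvp : Integrable (fun ω ↦ max (v ω - p) 0) μ := (hvi.sub (integrable_const p)).pos_part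
  have hpw : Integrable (fun ω ↦ max (p - w ω) 0) μ := ((integrable_const p).sub hwi).pos_part
  have hw_ind : Integrable (fun ω ↦ (Set.Iic p).indicator (1 : ℝ → ℝ) (w ω)) μ :=
    integrable_indicator_one_comp hwi.aemeasurable measurableSet_Iic
  have hv_ind : Integrable (fun ω ↦ (Set.Ici p).indicator (1 : ℝ → ℝ) (v ω)) μ :=
    integrable_indicator_one_comp hvi.aemeasurable measurableSet_Ici
  have hindep_buyer : IndepFun (fun ω ↦ max (v ω - p) 0)
      (fun ω ↦ (Set.Iic p).indicator (1 : ℝ → ℝ) (w ω)) μ :=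
    hindep.comp (φ := fun x ↦ max (x - p) 0) (by fun_prop)
      (measurable_one.indicator measurableSet_Iic)
  have hindep_seller : IndepFun (fun ω ↦ (Set.Ici p).indicator (1 : ℝ → ℝ) (v ω))
      (fun ω ↦ max (p - w ω) 0) μ :=
    hindep.comp (measurable_one.indicator measurableSet_Ici) (ψ := fun x ↦ max (p - x) 0)
      (by fun_prop)
  simp_rw [ite_and_sub_eq_max_mul_indicator_add]
  rw [integral_add (by exact hindep_buyer.integrable_mul hvp hw_ind)
      (by exact hindep_seller.integrable_mul hv_ind hpw),
    hindep_buyer.integral_fun_mul_eq_mul_integral hvp.1 hw_ind.1,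
    hindep_seller.integral_fun_mul_eq_mul_integral hv_ind.1 hpw.1,
    integral_indicator_one_comp hwi.aemeasurable measurableSet_Iic,
    integral_indicator_one_comp hvi.aemeasurable measurableSet_Ici]
  rfl

end

theorem stmt3_general {Ω : Type*} [MeasurableSpace Ω] (μ : Measure Ω) [IsProbabilityMeasure μ]
    (v w : Ω → ℝ)
    (hvi : Integrable v μ) (hwi : Integrable w μ)
    (hindep : IndepFun v w μ) (p : ℝ)
    (hpB : (1 : ℝ) / 2 ≤ (μ {ω | p ≤ v ω}).toReal)
    (hpS : (1 : ℝ) / 2 ≤ (μ {ω | w ω ≤ p}).toReal) :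
    ∫ ω, (if w ω ≤ v ω then v ω - w ω else 0) ∂μ ≤
      2 * ∫ ω, (if w ω ≤ p ∧ p ≤ v ω then v ω - w ω else 0) ∂μ := by
  have h_opt := integral_ite_sub_le_integral_max_add hvi hwi p
  have h_buyer : 0 ≤ ∫ ω, max (v ω - p) 0 ∂μ := integral_nonneg fun ω ↦ le_max_right _ _
  have h_seller : 0 ≤ ∫ ω, max (p - w ω) 0 ∂μ := integral_nonneg fun ω ↦ le_max_right _ _
  rw [hindep.integral_ite_and_sub_eq hvi hwi p, measureReal_def, measureReal_def]
  nlinarith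

theorem stmt3 {Ω : Type*} [MeasurableSpace Ω] (μ : Measure Ω) [IsProbabilityMeasure μ]
    (v w : Ω → ℝ) (hv : Measurable v) (hw : Measurable w)
    (hvi : Integrable v μ) (hwi : Integrable w μ)
    (hindep : IndepFun v w μ) (p : ℝ)
    (hpB : (1 : ℝ) / 2 ≤ (μ {ω | p ≤ v ω}).toReal)
    (hpS : (1 : ℝ) / 2 ≤ (μ {ω | w ω ≤ p}).toReal) :
    ∫ ω, (if w ω ≤ v ω then v ω - w ω else 0) ∂μ ≤
      2 * ∫ ω, (if w ω ≤ p ∧ p ≤ v ω then v ω - w ω else 0) ∂μ :=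
  stmt3_general μ v w hvi hwi hindep p hpB hpS
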